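/- arXiv:math/9204208 — 5 statements merged into one kernel-verified Lean document; each statement's English description precedes it below -/
import Mathlib

section
/- (The σ_1-proposition.) Let w be a finite list of letters, each letter being σ_i or σ_i^{-1} for some i ≥ 1, such that w contains at least one occurrence of σ_1 (positively) and no occurrence of σ_1^{-1}. Then the product of the letters of w in B∞ is not the identity element. -/
/-- Relators of the infinite braid group `B∞`: commutation `σ_i σ_j = σ_j σ_i` for
`|i - j| > 1` and the braid relation `σ_i σ_j σ_i = σ_j σ_i σ_j` for `|i - j| = 1`. -/
def braidRels : Set (FreeGroup ℕ+) :=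
  {r | (∃ i j : ℕ+, (i : ℕ) + 1 < (j : ℕ) ∧
        r = FreeGroup.of i * FreeGroup.of j * (FreeGroup.of i)⁻¹ * (FreeGroup.of j)⁻¹) ∨
       (∃ i : ℕ+,
        r = FreeGroup.of i * FreeGroup.of (i + 1) * FreeGroup.of i *
            (FreeGroup.of (i + 1))⁻¹ * (FreeGroup.of i)⁻¹ * (FreeGroup.of (i + 1))⁻¹)}

/-- The infinite braid group `B∞`. -/
abbrev Binf : Type := PresentedGroup braidRels

/-- The generator `σ_i` (`i ≥ 1`) of the infinite braid group. -/
def braidGen (i : ℕ+) : Binf := PresentedGroup.of i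

/-- The product in `B∞` of a word: a list of letters `(i, ε)`, where `(i, true)`
stands for `σ_i` and `(i, false)` for `σ_i⁻¹`. -/
def braidWordProd (w : List (ℕ+ × Bool)) : Binf :=
  (w.map fun p => if p.2 then braidGen p.1 else (braidGen p.1)⁻¹).prod

/-!
Larue's argument through the Artin representation. The braid generator `σ_i` acts on the free
group on `x₁, x₂, …` by `x_i ↦ x_i x_{i+1} x_i⁻¹`, `x_{i+1} ↦ x_i`, fixing the other generators.
Call `g` bracketed if its reduced word starts with `x₁` and ends with `x₁⁻¹`.

The key fact is letter tracking: if an injective endomorphism sends `x_a` to `x_c` and every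
other generator to a word without `x_c^{±1}`, then a reduced word starting (ending) with
`x_a^{±1}` is sent to one starting (ending) with `x_c^{±1}`, because the images of the maximal
`x_a`-free blocks are nonempty `x_c`-free words that cannot cancel against the letters `x_c^{±1}`.
For `i ≥ 2` this applies to `σ_i^{±1}` with `a = c = 1`, so they fix `x₁` and preserve
bracketed elements. Writing `σ₁ = conj(x₁) ∘ δ`, where `δ` swaps `x₁, x₂` and conjugates the
other generators by `x₁`, it applies to `δ` with `a = 1`, `c = 2`; so `σ₁` sends `x₁` and every
bracketed element to a bracketed one. Hence a word with `σ₁` and without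
`σ₁⁻¹` sends `x₁` to a bracketed element, which is not `x₁`.
-/

namespace FreeGroup

variable {α β : Type*}

theorem mk_singleton (a : α) (b : Bool) : mk [(a, b)] = of a ^ (if b then 1 else -1 : ℤ) := by
  cases b <;> simp [of, inv_mk, invRev]

theorem toWord_mk_of_isReduced [DecidableEq α] {L : List (α × Bool)} (h : IsReduced L) :
    (mk L).toWord = L := by
  rw [toWord_mk, h.reduce_eq]

theorem toWord_mul_of_isReduced [DecidableEq α] {x y : FreeGroup α}
    (h : IsReduced (x.toWord ++ y.toWord)) : (x * y).toWord = x.toWord ++ y.toWord := by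
  rw [toWord_mul, h.reduce_eq]

theorem getLast?_toWord_eq_some_iff [DecidableEq α] {g : FreeGroup α} {a : α} {b : Bool} :
    g.toWord.getLast? = some (a, b) ↔ g⁻¹.toWord.head? = some (a, !b) := by
  rw [toWord_inv, invRev, List.head?_reverse, List.getLast?_map]
  rcases g.toWord.getLast? with _ | ⟨a', b'⟩ <;> simp

theorem toWord_of_mul_mul_inv_of [DecidableEq α] {a c₁ c₂ : α} {b₁ b₂ : Bool} {h : FreeGroup α}
    (hc₁ : c₁ ≠ a) (hc₂ : c₂ ≠ a) (h_head : h.toWord.head? = some (c₁, b₁))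
    (h_last : h.toWord.getLast? = some (c₂, b₂)) :
    (of a * h * (of a)⁻¹).toWord = [(a, true)] ++ h.toWord ++ [(a, false)] := by
  have hred : IsReduced ([(a, true)] ++ h.toWord ++ [(a, false)]) := by
    refine List.isChain_append.mpr ⟨List.isChain_append.mpr ⟨.singleton _, isReduced_toWord, ?_⟩,
      .singleton _, ?_⟩
    · simp only [List.getLast?_singleton, Option.mem_def, Option.some.injEq, h_head]
      rintro _ rfl _ rfl h'
      exact absurd h'.symm hc₁
    · simp only [List.getLast?_append, h_last, List.getLast?_singleton, Option.mem_def,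
        Option.some_or, List.head?_cons, Option.some.injEq]
      rintro _ rfl _ rfl h'
      exact absurd h' hc₂
  rw [← toWord_mk_of_isReduced hred, ← mul_mk, ← mul_mk, mk_toWord]
  rfl

def avoiding [DecidableEq α] (c : α) : Subgroup (FreeGroup α) where
  carrier := {g | ∀ l ∈ g.toWord, l.1 ≠ c}
  mul_mem' {g h} hg hh l hl := by
    rcases List.mem_append.mp ((toWord_mul_sublist g h).subset hl) with hl | hl
    exacts [hg l hl, hh l hl]
  one_mem' := by simp
  inv_mem' {g} hg l hl := by
    simp only [toWord_inv, invRev, List.mem_reverse, List.mem_map] at hl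
    obtain ⟨l, hl, rfl⟩ := hl
    exact hg l hl

theorem mem_avoiding [DecidableEq α] {c : α} {g : FreeGroup α} :
    g ∈ avoiding c ↔ ∀ l ∈ g.toWord, l.1 ≠ c :=
  Iff.rfl

theorem of_mem_avoiding [DecidableEq α] {a c : α} (h : a ≠ c) : of a ∈ avoiding c := by
  simpa [mem_avoiding, toWord_of] using h

section LetterTracking

variable [DecidableEq β] {Φ : FreeGroup α →* FreeGroup β} {a : α} {c : β}

theorem map_mk_mem_avoiding (hΦ : ∀ j ≠ a, Φ (of j) ∈ avoiding c) {V : List (α × Bool)}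
    (hV : ∀ l ∈ V, l.1 ≠ a) : Φ (mk V) ∈ avoiding c := by
  induction V with
  | nil => simp [← one_eq_mk, one_mem]
  | cons l V ih =>
    rw [← List.singleton_append, ← mul_mk, _root_.map_mul, mk_singleton, map_zpow]
    exact mul_mem (zpow_mem (hΦ l.1 (hV l List.mem_cons_self)) _)
      (ih fun l hl => hV l (List.mem_cons_of_mem _ hl))

theorem toWord_map_mk_cons (ha : Φ (of a) = of c) {b : Bool} {W : List (α × Bool)}
    (hW : IsReduced ((a, b) :: W))
    (hW_head : ∀ b', (Φ (mk W)).toWord.head? = some (c, b') → W.head? = some (a, b')) :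
    (Φ (mk ((a, b) :: W))).toWord = (c, b) :: (Φ (mk W)).toWord := by
  have hreduced : IsReduced ((c, b) :: (Φ (mk W)).toWord) := by
    rcases hM : (Φ (mk W)).toWord with _ | ⟨⟨c', b'⟩, M⟩
    · exact .singleton
    refine isReduced_cons_cons.mpr ⟨?_, hM ▸ isReduced_toWord⟩
    rintro rfl
    obtain ⟨W', rfl⟩ := List.head?_eq_some_iff.mp (hW_head b' (by rw [hM]; rfl))
    exact (isReduced_cons_cons.mp hW).1 rfl
  have hsingle : (mk [(c, b)]).toWord = [(c, b)] := toWord_mk_of_isReduced .singleton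
  rw [← List.singleton_append, ← mul_mk, _root_.map_mul, mk_singleton, map_zpow, ha,
    ← mk_singleton, toWord_mul_of_isReduced (by rwa [hsingle]), hsingle, List.singleton_append]

theorem head?_toWord_map_mk_append_ne [DecidableEq α] (hinj : Function.Injective Φ)
    (hΦ : ∀ j ≠ a, Φ (of j) ∈ avoiding c) {V W : List (α × Bool)} (hVW : IsReduced (V ++ W))
    (hV : V ≠ []) (hVa : ∀ l ∈ V, l.1 ≠ a) (hW : ∀ l ∈ (Φ (mk W)).toWord.head?, l.1 = c) :
    ∀ l ∈ (Φ (mk (V ++ W))).toWord.head?, l.1 ≠ c := by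
  have hU : Φ (mk V) ∈ avoiding c := map_mk_mem_avoiding hΦ hVa
  have hU_ne : (Φ (mk V)).toWord ≠ [] := by
    rw [Ne, toWord_eq_nil_iff, map_eq_one_iff _ hinj, ← toWord_eq_nil_iff,
      toWord_mk_of_isReduced (hVW.infix (List.prefix_append V W).isInfix)]
    exact hV
  have hreduced : IsReduced ((Φ (mk V)).toWord ++ (Φ (mk W)).toWord) := by
    refine List.isChain_append.mpr ⟨isReduced_toWord, isReduced_toWord, ?_⟩
    intro x hx y hy hxy
    exact absurd (hxy.trans (hW y hy)) (hU x (List.mem_of_getLast? hx))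
  rw [← mul_mk, _root_.map_mul, toWord_mul_of_isReduced hreduced, List.head?_append,
    List.head?_eq_some_head hU_ne]
  rintro l hl
  exact hU l (by simpa using (Option.mem_some_iff.mp hl) ▸ List.head_mem hU_ne)

theorem head?_toWord_map_mk_eq_some_iff [DecidableEq α] (hinj : Function.Injective Φ)
    (ha : Φ (of a) = of c) (hΦ : ∀ j ≠ a, Φ (of j) ∈ avoiding c) {W : List (α × Bool)}
    (hW : IsReduced W) (b : Bool) :
    W.head? = some (a, b) ↔ (Φ (mk W)).toWord.head? = some (c, b) := by
  induction hn : W.length using Nat.strong_induction_on generalizing W b with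
  | _ n ih =>
  subst hn
  rcases W with _ | ⟨⟨j, b₀⟩, W⟩
  · simp [← one_eq_mk]
  by_cases hj : j = a
  · rw [hj] at hW ⊢
    have hWred := hW.infix (List.suffix_cons _ _).isInfix
    rw [toWord_map_mk_cons ha hW fun b' => (ih _ (by simp) hWred b' rfl).mpr]
    simp
  -- Split off the maximal prefix of letters other than `x_a^{±1}`.
  set p : α × Bool → Bool := fun l => l.1 != a
  have hVa : ∀ l ∈ (j, b₀) :: W.takeWhile p, l.1 ≠ a := by
    intro l hl
    rcases List.mem_cons.mp hl with rfl | hl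
    · exact hj
    · simpa [p] using List.mem_takeWhile_imp hl
  have hW₂ : ∀ l ∈ (Φ (mk (W.dropWhile p))).toWord.head?, l.1 = c := by
    rcases hW₂ : W.dropWhile p with _ | ⟨⟨a', b'⟩, W₂⟩
    · simp [← one_eq_mk]
    obtain rfl : a' = a := by simpa [hW₂, p] using List.head?_dropWhile_not p W
    have hred : IsReduced (W.dropWhile p) :=
      hW.infix ((List.dropWhile_suffix p).trans (List.suffix_cons _ _)).isInfix
    have hlt := Nat.lt_succ_of_le (List.length_dropWhile_le p W)
    have h_head := (ih _ hlt hred b' rfl).mp (by rw [hW₂]; rfl)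
    rw [hW₂] at h_head
    simp [h_head]
  have hne := head?_toWord_map_mk_append_ne hinj hΦ (by simpa using hW) (List.cons_ne_nil _ _)
    hVa hW₂
  rw [List.cons_append, List.takeWhile_append_dropWhile] at hne
  simp only [List.head?_cons, Option.some.injEq, Prod.mk.injEq, hj, false_and, false_iff]
  exact fun h => hne _ h rfl

theorem head?_toWord_map [DecidableEq α] (hinj : Function.Injective Φ) (ha : Φ (of a) = of c)
    (hΦ : ∀ j ≠ a, Φ (of j) ∈ avoiding c) {g : FreeGroup α} {b : Bool}
    (hg : g.toWord.head? = some (a, b)) : (Φ g).toWord.head? = some (c, b) := by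
  have := (head?_toWord_map_mk_eq_some_iff hinj ha hΦ isReduced_toWord b).mp hg
  rwa [mk_toWord] at this

theorem getLast?_toWord_map [DecidableEq α] (hinj : Function.Injective Φ) (ha : Φ (of a) = of c)
    (hΦ : ∀ j ≠ a, Φ (of j) ∈ avoiding c) {g : FreeGroup α} {b : Bool}
    (hg : g.toWord.getLast? = some (a, b)) : (Φ g).toWord.getLast? = some (c, b) := by
  rw [getLast?_toWord_eq_some_iff] at hg ⊢
  rw [← _root_.map_inv]
  exact head?_toWord_map hinj ha hΦ hg

end LetterTracking

end FreeGroup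

@[simp] theorem PNat.add_one_ne_self (i : ℕ+) : i + 1 ≠ i := (PNat.lt_add_right i 1).ne'

@[simp] theorem PNat.self_ne_add_one (i : ℕ+) : i ≠ i + 1 := (PNat.add_one_ne_self i).symm

@[simp] theorem PNat.add_one_add_one_ne_self (i : ℕ+) : i + 1 + 1 ≠ i :=
  ((PNat.lt_add_right i 1).trans (PNat.lt_add_right _ 1)).ne'

@[simp] theorem PNat.self_ne_add_one_add_one (i : ℕ+) : i ≠ i + 1 + 1 :=
  (PNat.add_one_add_one_ne_self i).symm

@[simp] theorem PNat.add_one_ne_one (i : ℕ+) : i + 1 ≠ 1 := (PNat.lt_add_left 1 i).ne'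

@[simp] theorem PNat.one_ne_add_one (i : ℕ+) : 1 ≠ i + 1 := (PNat.add_one_ne_one i).symm

open FreeGroup

def artinGenImage (i k : ℕ+) : FreeGroup ℕ+ :=
  if k = i then of i * of (i + 1) * (of i)⁻¹ else if k = i + 1 then of i else of k

def artinInvGenImage (i k : ℕ+) : FreeGroup ℕ+ :=
  if k = i then of (i + 1) else if k = i + 1 then (of (i + 1))⁻¹ * of i * of (i + 1) else of k

def artin (i : ℕ+) : MulAut (FreeGroup ℕ+) :=
  MonoidHom.toMulEquiv (lift (artinGenImage i)) (lift (artinInvGenImage i))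
    (ext_hom _ _ fun k => by
      simp only [MonoidHom.comp_apply, MonoidHom.id_apply, lift_apply_of, artinGenImage]
      split_ifs <;> simp [artinInvGenImage, *]
      group)
    (ext_hom _ _ fun k => by
      simp only [MonoidHom.comp_apply, MonoidHom.id_apply, lift_apply_of, artinInvGenImage]
      split_ifs <;> simp [artinGenImage, *]
      group)

theorem artin_apply_of (i k : ℕ+) : artin i (of k) = artinGenImage i k := lift_apply_of

theorem artin_symm_apply_of (i k : ℕ+) : (artin i).symm (of k) = artinInvGenImage i k :=
  lift_apply_of

theorem artin_mul_comm (i j : ℕ+) (hij : (i : ℕ) + 1 < j) :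
    artin i * artin j = artin j * artin i := by
  refine MulEquiv.toMonoidHom_injective (ext_hom _ _ fun k => ?_)
  simp only [MulEquiv.toMonoidHom_eq_coe, MonoidHom.coe_coe, MulAut.mul_apply, artin_apply_of,
    artinGenImage]
  split_ifs <;> simp_all [artin_apply_of, artinGenImage, ← PNat.coe_inj] <;> omega

theorem artin_braid (i : ℕ+) :
    artin i * artin (i + 1) * artin i = artin (i + 1) * artin i * artin (i + 1) := by
  refine MulEquiv.toMonoidHom_injective (ext_hom _ _ fun k => ?_)
  simp only [MulEquiv.toMonoidHom_eq_coe, MonoidHom.coe_coe, MulAut.mul_apply, artin_apply_of,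
    artinGenImage]
  split_ifs <;> simp_all [artin_apply_of, artinGenImage]
  group

theorem lift_artin_braidRels : ∀ r ∈ braidRels, lift artin r = 1 := by
  rintro r (⟨i, j, hij, rfl⟩ | ⟨i, rfl⟩) <;>
    simp only [_root_.map_mul, _root_.map_inv, lift_apply_of]
  · rw [artin_mul_comm i j hij]; group
  · rw [artin_braid i]; group

def artinRep : Binf →* MulAut (FreeGroup ℕ+) := PresentedGroup.toGroup lift_artin_braidRels

theorem artinRep_braidGen (i : ℕ+) : artinRep (braidGen i) = artin i :=
  PresentedGroup.toGroup.of lift_artin_braidRels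

def IsOneBracketed (g : FreeGroup ℕ+) : Prop :=
  g.toWord.head? = some (1, true) ∧ g.toWord.getLast? = some (1, false)

theorem not_isOneBracketed_of_one : ¬IsOneBracketed (of 1) := by
  simp [IsOneBracketed, toWord_of]

theorem IsOneBracketed.map {e : MulAut (FreeGroup ℕ+)} (he : e (of 1) = of 1)
    (he_avoiding : ∀ j ≠ 1, e (of j) ∈ avoiding 1) {g : FreeGroup ℕ+} (hg : IsOneBracketed g) :
    IsOneBracketed (e g) :=
  ⟨head?_toWord_map (Φ := e.toMonoidHom) e.injective he he_avoiding hg.1,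
    getLast?_toWord_map (Φ := e.toMonoidHom) e.injective he he_avoiding hg.2⟩

section ArtinOfNeOne

variable {i : ℕ+}

theorem artin_apply_of_one (hi : i ≠ 1) : artin i (of 1) = of 1 := by
  simp [artin_apply_of, artinGenImage, Ne.symm hi]

theorem artin_symm_apply_of_one (hi : i ≠ 1) : (artin i).symm (of 1) = of 1 := by
  rw [MulEquiv.symm_apply_eq, artin_apply_of_one hi]

theorem artin_apply_of_mem_avoiding (hi : i ≠ 1) {j : ℕ+} (hj : j ≠ 1) :
    artin i (of j) ∈ avoiding 1 := by
  rw [artin_apply_of, artinGenImage]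
  split_ifs <;>
    apply_rules [mul_mem, inv_mem, of_mem_avoiding, PNat.add_one_ne_one]

theorem artin_symm_apply_of_mem_avoiding (hi : i ≠ 1) {j : ℕ+} (hj : j ≠ 1) :
    (artin i).symm (of j) ∈ avoiding 1 := by
  rw [artin_symm_apply_of, artinInvGenImage]
  split_ifs <;>
    apply_rules [mul_mem, inv_mem, of_mem_avoiding, PNat.add_one_ne_one]

end ArtinOfNeOne

def artinOneCore : MulAut (FreeGroup ℕ+) := (MulAut.conj (of 1))⁻¹ * artin 1

theorem artin_one_apply (g : FreeGroup ℕ+) :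
    artin 1 g = of 1 * artinOneCore g * (of 1)⁻¹ := by
  simp [artinOneCore, MulAut.mul_apply]
  group

theorem artinOneCore_apply_of_one : artinOneCore (of 1) = of 2 := by
  simp [artinOneCore, MulAut.mul_apply, artin_apply_of, artinGenImage,
    show (1 : ℕ+) + 1 = 2 from rfl]
  group

theorem artinOneCore_apply_of_mem_avoiding {j : ℕ+} (hj : j ≠ 1) :
    artinOneCore (of j) ∈ avoiding 2 := by
  simp only [artinOneCore, MulAut.mul_apply, MulAut.conj_inv_apply, artin_apply_of, artinGenImage,
    show (1 : ℕ+) + 1 = 2 from rfl, if_neg hj]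
  have h12 : (1 : ℕ+) ≠ 2 := by decide
  split_ifs <;> apply_rules [mul_mem, inv_mem, of_mem_avoiding]

theorem isOneBracketed_artin_one {g : FreeGroup ℕ+} (hg : g = of 1 ∨ IsOneBracketed g) :
    IsOneBracketed (artin 1 g) := by
  obtain ⟨b₁, b₂, h_head, h_last⟩ : ∃ b₁ b₂, (artinOneCore g).toWord.head? = some (2, b₁) ∧
      (artinOneCore g).toWord.getLast? = some (2, b₂) := by
    rcases hg with rfl | hg
    · exact ⟨true, true, by simp [artinOneCore_apply_of_one, toWord_of]⟩
    · exact ⟨true, false,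
        head?_toWord_map (Φ := artinOneCore.toMonoidHom) artinOneCore.injective
          artinOneCore_apply_of_one (fun _ => artinOneCore_apply_of_mem_avoiding) hg.1,
        getLast?_toWord_map (Φ := artinOneCore.toMonoidHom) artinOneCore.injective
          artinOneCore_apply_of_one (fun _ => artinOneCore_apply_of_mem_avoiding) hg.2⟩
  rw [artin_one_apply, IsOneBracketed,
    toWord_of_mul_mul_inv_of (by decide) (by decide) h_head h_last, List.getLast?_append]
  simp

theorem artinRep_braidWordProd_cons (l : ℕ+ × Bool) (w : List (ℕ+ × Bool)) (g : FreeGroup ℕ+) :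
    artinRep (braidWordProd (l :: w)) g =
      if l.2 then artin l.1 (artinRep (braidWordProd w) g)
      else (artin l.1).symm (artinRep (braidWordProd w) g) := by
  obtain ⟨i, b⟩ := l
  cases b <;> simp [braidWordProd, MulAut.mul_apply, artinRep_braidGen, MulAut.inv_apply]

theorem artinRep_braidWordProd_of_one_eq_or_isOneBracketed {w : List (ℕ+ × Bool)}
    (hneg : (1, false) ∉ w) :
    artinRep (braidWordProd w) (of 1) = of 1 ∨
      IsOneBracketed (artinRep (braidWordProd w) (of 1)) := by
  induction w with
  | nil => left; simp [braidWordProd]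
  | cons l w ih =>
    obtain ⟨i, b⟩ := l
    rw [List.mem_cons, not_or] at hneg
    rw [artinRep_braidWordProd_cons]
    by_cases hi : i = 1
    · subst hi
      obtain rfl : b = true := by simpa using hneg.1
      exact .inr (isOneBracketed_artin_one (ih hneg.2))
    rcases ih hneg.2 with h | h
    · rw [h]
      cases b
      exacts [.inl (artin_symm_apply_of_one hi), .inl (artin_apply_of_one hi)]
    cases b
    · exact .inr (h.map (artin_symm_apply_of_one hi) fun _ => artin_symm_apply_of_mem_avoiding hi)
    · exact .inr (h.map (artin_apply_of_one hi) fun _ => artin_apply_of_mem_avoiding hi)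

theorem isOneBracketed_artinRep_braidWordProd {w : List (ℕ+ × Bool)} (hpos : (1, true) ∈ w)
    (hneg : (1, false) ∉ w) : IsOneBracketed (artinRep (braidWordProd w) (of 1)) := by
  induction w with
  | nil => simp at hpos
  | cons l w ih =>
    obtain ⟨i, b⟩ := l
    rw [List.mem_cons, not_or] at hneg
    rw [artinRep_braidWordProd_cons]
    by_cases hi : i = 1
    · subst hi
      obtain rfl : b = true := by simpa using hneg.1
      exact isOneBracketed_artin_one (artinRep_braidWordProd_of_one_eq_or_isOneBracketed hneg.2)
    have h := ih (by simpa [Ne.symm hi] using hpos) hneg.2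
    cases b
    · exact h.map (artin_symm_apply_of_one hi) fun _ => artin_symm_apply_of_mem_avoiding hi
    · exact h.map (artin_apply_of_one hi) fun _ => artin_apply_of_mem_avoiding hi

/-- The σ₁-proposition: a braid word containing at least one `σ_1` and no `σ_1⁻¹`
does not represent the identity of `B∞`. -/
theorem sigma_one_proposition (w : List (ℕ+ × Bool))
    (hpos : (1, true) ∈ w) (hneg : (1, false) ∉ w) :
    braidWordProd w ≠ 1 := by
  intro h
  have := isOneBracketed_artinRep_braidWordProd hpos hneg
  rw [h, _root_.map_one] at this
  exact not_isOneBracketed_of_one this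
end

section
/- (Left-distributivity of the Dehornoy bracket.) For all p, q, r ∈ B∞, p[q[r]] = (p[q])[p[r]], where p[q] = p·s(q)·σ_1·s(p)^{-1}. -/
/-- The Dehornoy bracket `p[q] = p · s(q) · σ_1 · s(p)⁻¹`, relative to the shift
endomorphism `s`. -/
def bracket (s : Binf →* Binf) (p q : Binf) : Binf :=
  p * s q * braidGen 1 * (s p)⁻¹

/-! Dehornoy's criterion: for a group `G` with an endomorphism `s` and an element `a` that commutes
with `s² G` and braids with `s a`, the operation `x[y] = x · s y · a · (s x)⁻¹` is left
distributive. In `B∞` with `a = σ₁`, the first condition is the far commutation `σ₁ σ_{i+2} =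
σ_{i+2} σ₁` and the second is the braid relation between `σ₁` and `σ₂`. -/

def shiftBracket {G : Type*} [Group G] (s : G →* G) (a x y : G) : G :=
  x * s y * a * (s x)⁻¹

theorem shiftBracket_left_distrib {G : Type*} [Group G] (s : G →* G) (a : G)
    (hcomm : ∀ x, Commute a (s (s x))) (hbraid : a * s a * a = s a * a * s a) (p q r : G) :
    shiftBracket s a p (shiftBracket s a q r)
      = shiftBracket s a (shiftBracket s a p q) (shiftBracket s a p r) := by
  have hconj : (s (s p))⁻¹ * a * s (s p) = a := by
    rw [mul_assoc, (hcomm p).eq, inv_mul_cancel_left]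
  symm
  calc shiftBracket s a (shiftBracket s a p q) (shiftBracket s a p r)
      = p * s q * (a * s (s r) * s a * ((s (s p))⁻¹ * a * s (s p)) * (s a)⁻¹ * (s (s q))⁻¹)
          * (s p)⁻¹ := by
        simp only [shiftBracket, map_mul, map_inv]; group
    _ = p * s q * (s (s r) * (a * s a * a) * (s a)⁻¹ * (s (s q))⁻¹) * (s p)⁻¹ := by
        rw [hconj, (hcomm r).eq]; group
    _ = p * s q * (s (s r) * s a * (a * (s (s q))⁻¹)) * (s p)⁻¹ := by
        rw [hbraid]; group
    _ = shiftBracket s a p (shiftBracket s a q r) := by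
        rw [((hcomm q).inv_right).eq]
        simp only [shiftBracket, map_mul, map_inv]; group

theorem braidGen_commute {i j : ℕ+} (h : (i : ℕ) + 1 < j) :
    Commute (braidGen i) (braidGen j) := by
  have hrel := PresentedGroup.one_of_mem (rels := braidRels) (Or.inl ⟨i, j, h, rfl⟩)
  simp only [map_mul, map_inv] at hrel
  change braidGen i * braidGen j * (braidGen i)⁻¹ * (braidGen j)⁻¹ = 1 at hrel
  exact mul_inv_eq_iff_eq_mul.mp (mul_inv_eq_one.mp hrel)

theorem braidGen_braid (i : ℕ+) :
    braidGen i * braidGen (i + 1) * braidGen i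
      = braidGen (i + 1) * braidGen i * braidGen (i + 1) := by
  have hrel := PresentedGroup.one_of_mem (rels := braidRels) (Or.inr ⟨i, rfl⟩)
  simp only [map_mul, map_inv] at hrel
  change braidGen i * braidGen (i + 1) * braidGen i * (braidGen (i + 1))⁻¹ * (braidGen i)⁻¹
    * (braidGen (i + 1))⁻¹ = 1 at hrel
  exact mul_inv_eq_iff_eq_mul.mp (mul_inv_eq_iff_eq_mul.mp (mul_inv_eq_one.mp hrel))

theorem braidGen_one_commute_shift_shift (s : Binf →* Binf)
    (hs : ∀ i : ℕ+, s (braidGen i) = braidGen (i + 1)) (x : Binf) :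
    Commute (braidGen 1) (s (s x)) := by
  have hext : (MulAut.conj (braidGen 1)).toMonoidHom.comp (s.comp s) = s.comp s := by
    refine PresentedGroup.ext fun i => ?_
    change braidGen 1 * s (s (braidGen i)) * (braidGen 1)⁻¹ = s (s (braidGen i))
    rw [hs, hs, (braidGen_commute _).eq, mul_inv_cancel_right]
    have := i.pos
    simp only [PNat.add_coe, PNat.one_coe]
    omega
  exact mul_inv_eq_iff_eq_mul.mp (DFunLike.congr_fun hext x)

/-- Left-distributivity of the Dehornoy bracket:
`p[q[r]] = (p[q])[p[r]]`. -/
theorem bracket_left_distributive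
    (s : Binf →* Binf) (hs : ∀ i : ℕ+, s (braidGen i) = braidGen (i + 1))
    (p q r : Binf) :
    bracket s p (bracket s q r) = bracket s (bracket s p q) (bracket s p r) :=
  shiftBracket_left_distrib s (braidGen 1) (braidGen_one_commute_shift_shift s hs)
    (by rw [hs]; exact braidGen_braid 1) p q r
end

section
/- For every k ≥ 1 and all p, q_1, …, q_k ∈ B∞, there exist r_1, s_1, …, r_k, s_k all lying in the image of the shift endomorphism s such that (((p[q_1])[q_2])…)[q_k] = p·(r_1·σ_1·s_1)·(r_2·σ_1·s_2)·…·(r_k·σ_1·s_k). -/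
theorem iterated_bracket_expansion_aux
    (s : Binf →* Binf) (k : ℕ) (p : Binf) (q : Fin k → Binf) :
    ∃ r t : Fin k → Binf,
      (∀ i, r i ∈ Set.range s) ∧ (∀ i, t i ∈ Set.range s) ∧
      (List.ofFn q).foldl (bracket s) p =
        p * (List.ofFn fun i => r i * braidGen 1 * t i).prod := by
  induction k with
  | zero =>
    exact ⟨Fin.elim0, Fin.elim0, fun i => i.elim0, fun i => i.elim0, by simp⟩
  | succ n ih =>
    obtain ⟨r', t', hr', ht', h'⟩ := ih (q ∘ Fin.castSucc)
    set P := (List.ofFn (q ∘ Fin.castSucc)).foldl (bracket s) p with hP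
    refine ⟨(Fin.snoc r' (s (q (Fin.last n))) : Fin (n+1) → Binf),
      (Fin.snoc t' ((s P)⁻¹) : Fin (n+1) → Binf), ?_, ?_, ?_⟩
    · intro i
      refine Fin.lastCases ?_ ?_ i
      · simp
      · intro j; simpa using hr' j
    · intro i
      refine Fin.lastCases ?_ ?_ i
      · simp only [Fin.snoc_last]
        exact ⟨P⁻¹, by simp⟩
      · intro j; simpa using ht' j
    · have hq : List.ofFn q = (List.ofFn (q ∘ Fin.castSucc)).concat (q (Fin.last n)) := by
        rw [List.ofFn_succ']; rfl
      have hlist : (List.ofFn fun i : Fin (n + 1) =>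
            (Fin.snoc r' (s (q (Fin.last n))) : Fin (n+1) → Binf) i * braidGen 1 *
              (Fin.snoc t' ((s P)⁻¹) : Fin (n+1) → Binf) i) =
          (List.ofFn fun i : Fin n => r' i * braidGen 1 * t' i).concat
            (s (q (Fin.last n)) * braidGen 1 * (s P)⁻¹) := by
        rw [List.ofFn_succ']
        simp [Fin.snoc_castSucc]
      rw [hq, List.concat_eq_append, List.foldl_append, hlist, List.concat_eq_append,
        List.prod_append]
      simp only [List.foldl_cons, List.foldl_nil, List.prod_cons, List.prod_nil]
      rw [← hP]
      rw [bracket, h']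
      group

/-- The iterated bracket `(((p[q₁])[q₂])…)[q_k]` expands as
`p · (r₁·σ_1·s₁) · … · (r_k·σ_1·s_k)` with all `r_i, s_i` in the image of the shift. -/
theorem iterated_bracket_expansion
    (s : Binf →* Binf) (hs : ∀ i : ℕ+, s (braidGen i) = braidGen (i + 1))
    (k : ℕ) (hk : 1 ≤ k) (p : Binf) (q : Fin k → Binf) :
    ∃ r t : Fin k → Binf,
      (∀ i, r i ∈ Set.range s) ∧ (∀ i, t i ∈ Set.range s) ∧
      (List.ofFn q).foldl (bracket s) p =
        p * (List.ofFn fun i => r i * braidGen 1 * t i).prod := by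
  exact iterated_bracket_expansion_aux s k p q
end

section
/- Let f be an element of the free group F_G whose reduced word begins with the letter g_1 (with positive sign). Let σ be φ_i or φ_i^{-1} for some i ≥ 1, but not φ_1^{-1}. Then the reduced word of σ(f) also begins with g_1 (with positive sign). -/
/-!
Applying `φ_i` letter by letter to a reduced word `w` and reducing from the right, the first
one or two letters of the reduced word of `φ_i(w)` are determined by the first letter of `w`
(`ArtinImageHead`); in particular a leading `g_1` survives `φ_1` and every `φ_i` with `i ≥ 2`.
For the inverses, `φ_i⁻¹ = θ φ_i θ`, where `θ` swaps `g_i` and `g_{i+1}` and inverts every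
generator: `θ` acts letter by letter on reduced words, and fixes the index `1` when `i ≥ 2`.
-/

/-- The Artin automorphism `φ_i` (as an endomorphism of the free group on
`g_0, g_1, …`, given by its values on the generators): `g_i ↦ g_i g_{i+1} g_i⁻¹`,
`g_{i+1} ↦ g_i`, and `g_j ↦ g_j` for `j ≠ i, i+1`. -/
def artinHom (i : ℕ) : FreeGroup ℕ →* FreeGroup ℕ :=
  FreeGroup.lift fun j =>
    if j = i then FreeGroup.of i * FreeGroup.of (i + 1) * (FreeGroup.of i)⁻¹
    else if j = i + 1 then FreeGroup.of i
    else FreeGroup.of j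

/-- The inverse Artin automorphism `φ_i⁻¹`: `g_i ↦ g_{i+1}`,
`g_{i+1} ↦ g_{i+1}⁻¹ g_i g_{i+1}`, and `g_j ↦ g_j` for `j ≠ i, i+1`. -/
def artinInvHom (i : ℕ) : FreeGroup ℕ →* FreeGroup ℕ :=
  FreeGroup.lift fun j =>
    if j = i then FreeGroup.of (i + 1)
    else if j = i + 1 then (FreeGroup.of (i + 1))⁻¹ * FreeGroup.of i * FreeGroup.of (i + 1)
    else FreeGroup.of j

namespace FreeGroup

variable {α β : Type*}

theorem IsReduced.head?_ne {x : α × Bool} {L : List (α × Bool)}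
    (h : IsReduced (x :: L)) : L.head? ≠ some (x.1, !x.2) := by
  rcases L with _ | ⟨y, L⟩
  · simp
  · rintro ⟨⟩
    simpa using (isReduced_cons_cons.mp h).1 rfl

theorem lift_inv_of_mk (e : α → β) (L : List (α × Bool)) :
    lift (fun a => (of (e a))⁻¹) (mk L) = mk (L.map fun x => (e x.1, !x.2)) := by
  induction L with
  | nil => rfl
  | cons x L ih =>
    rw [← List.singleton_append, ← mul_mk, _root_.map_mul, ih, List.map_append, ← mul_mk]
    obtain ⟨a, b⟩ := x
    cases b <;> simp [lift_mk, FreeGroup.of, inv_mk, invRev]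

theorem toWord_lift_inv_of [DecidableEq α] [DecidableEq β] {e : α → β}
    (he : Function.Injective e) (f : FreeGroup α) :
    (lift (fun a => (of (e a))⁻¹) f).toWord = f.toWord.map fun x => (e x.1, !x.2) := by
  conv_lhs => rw [← mk_toWord (x := f), lift_inv_of_mk, toWord_mk]
  exact IsReduced.reduce_eq <| List.isChain_map_of_isChain _
    (fun x y hxy hexy => by simpa using hxy (he hexy)) isReduced_toWord

end FreeGroup

open FreeGroup

def artinLetterImage (i : ℕ) (x : ℕ × Bool) : List (ℕ × Bool) :=
  if x.1 = i then [(i, true), (i + 1, x.2), (i, false)]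
  else if x.1 = i + 1 then [(i, x.2)] else [x]

theorem artinHom_mk_singleton (i : ℕ) (x : ℕ × Bool) :
    artinHom i (mk [x]) = mk (artinLetterImage i x) := by
  obtain ⟨k, b⟩ := x
  unfold artinLetterImage
  split_ifs with hk hk' <;> cases b <;>
    simp_all [artinHom, lift_mk, FreeGroup.of, mul_mk, inv_mk, invRev]

theorem toWord_artinHom_mk_singleton (i : ℕ) (x : ℕ × Bool) :
    (artinHom i (mk [x])).toWord = artinLetterImage i x := by
  rw [artinHom_mk_singleton, toWord_mk]
  unfold artinLetterImage
  split_ifs <;> simp [reduce.cons]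

/-- `ArtinImageHead i x R`: `R` begins the way the reduced word of `φ_i(w)` begins when the
reduced word of `w` begins with the letter `x` (`x = none` for `w = 1`). The condition in
`succ_pos` is what stops the cancellation `g_i⁻¹ g_i` in `cons_self` from going further. -/
inductive ArtinImageHead (i : ℕ) : Option (ℕ × Bool) → List (ℕ × Bool) → Prop
  | nil : ArtinImageHead i none []
  | self (c : Bool) (M : List (ℕ × Bool)) :
      ArtinImageHead i (some (i, c)) ((i, true) :: (i + 1, c) :: M)
  | succ_pos (M : List (ℕ × Bool)) (hM : ∀ z ∈ M.head?, z ≠ (i, false) ∧ z.1 ≠ i + 1) :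
      ArtinImageHead i (some (i + 1, true)) ((i, true) :: M)
  | succ_neg_self (M : List (ℕ × Bool)) :
      ArtinImageHead i (some (i + 1, false)) ((i, false) :: M)
  | succ_neg_succ (c : Bool) (M : List (ℕ × Bool)) :
      ArtinImageHead i (some (i + 1, false)) ((i + 1, c) :: M)
  | other (k : ℕ) (c : Bool) (M : List (ℕ × Bool)) (hk : k ≠ i) (hk' : k ≠ i + 1) :
      ArtinImageHead i (some (k, c)) ((k, c) :: M)

namespace ArtinImageHead

variable {i : ℕ} {y : Option (ℕ × Bool)} {R : List (ℕ × Bool)}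

theorem cons_other {k : ℕ} {b : Bool} (hk : k ≠ i) (hk' : k ≠ i + 1)
    (h : ArtinImageHead i y R) (hR : IsReduced R) (hy : y ≠ some (k, !b)) :
    ArtinImageHead i (some (k, b)) (reduce ((k, b) :: R)) := by
  have hR' : IsReduced ((k, b) :: R) := by
    cases h <;> simp_all [isReduced_cons_cons]
  rw [hR'.reduce_eq]
  exact .other _ _ _ hk hk'

theorem cons_self {c : Bool}
    (h : ArtinImageHead i y R) (hR : IsReduced R) (hy : y ≠ some (i, !c)) :
    ArtinImageHead i (some (i, c)) (reduce ((i, true) :: (i + 1, c) :: (i, false) :: R)) := by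
  have hR' := hR.reduce_eq
  cases h with
  | succ_pos M hM =>
    rcases M with _ | ⟨⟨k, d⟩, M⟩
    · simp [reduce.cons]
      exact .self _ _
    · obtain ⟨-, hk⟩ : (k = i → d = true) ∧ k ≠ i + 1 := by simpa using hM
      simp [reduce.cons, hR', Ne.symm hk]
      exact .self _ _
  | other k d M hk hk' =>
    simp [reduce.cons, hR', Ne.symm hk]
    exact .self _ _
  | nil => simp [reduce.cons]; exact .self _ _
  | self c M => simp_all [reduce.cons]; exact .self _ _
  | succ_neg_self M => simp_all [reduce.cons]; exact .self _ _
  | succ_neg_succ d M => simp_all [reduce.cons]; exact .self _ _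

theorem cons_succ_pos
    (h : ArtinImageHead i y R) (hR : IsReduced R) (hy : y ≠ some (i + 1, false)) :
    ArtinImageHead i (some (i + 1, true)) (reduce ((i, true) :: R)) := by
  have hR' := hR.reduce_eq
  cases h with
  | nil => exact .succ_pos _ (by simp)
  | self c M => simp [reduce.cons, hR']; exact .succ_pos _ (by simp)
  | succ_pos M hM => simp [reduce.cons, hR']; exact .succ_pos _ (by simp)
  | succ_neg_self M => simp at hy
  | succ_neg_succ c M => simp at hy
  | other k d M hk hk' => simp [reduce.cons, hR', Ne.symm hk]; exact .succ_pos _ (by simp [hk, hk'])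

theorem cons_succ_neg
    (h : ArtinImageHead i y R) (hR : IsReduced R) (hy : y ≠ some (i + 1, true)) :
    ArtinImageHead i (some (i + 1, false)) (reduce ((i, false) :: R)) := by
  have hR' := hR.reduce_eq
  cases h with
  | nil => exact .succ_neg_self _
  | self c M =>
    simp [reduce.cons, hR']
    exact .succ_neg_succ _ _
  | succ_pos M hM => simp at hy
  | succ_neg_self M => simp [reduce.cons, hR']; exact .succ_neg_self _
  | succ_neg_succ c M => simp [reduce.cons, hR']; exact .succ_neg_self _
  | other k d M hk hk' => simp [reduce.cons, hR', Ne.symm hk]; exact .succ_neg_self _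

theorem cons {x : ℕ × Bool} (h : ArtinImageHead i y R) (hR : IsReduced R)
    (hy : y ≠ some (x.1, !x.2)) :
    ArtinImageHead i (some x) (reduce (artinLetterImage i x ++ R)) := by
  obtain ⟨k, b⟩ := x
  obtain rfl | hk := eq_or_ne k i
  · simpa [artinLetterImage] using h.cons_self hR hy
  obtain rfl | hk' := eq_or_ne k (i + 1)
  · cases b
    · simpa [artinLetterImage] using h.cons_succ_neg hR hy
    · simpa [artinLetterImage] using h.cons_succ_pos hR hy
  · simpa [artinLetterImage, hk, hk'] using h.cons_other hk hk' hR hy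

end ArtinImageHead

theorem artinImageHead_mk (i : ℕ) :
    ∀ L : List (ℕ × Bool), IsReduced L → ArtinImageHead i L.head? (artinHom i (mk L)).toWord
  | [], _ => .nil
  | x :: L, hL => by
    rw [show mk (x :: L) = mk [x] * mk L by rw [mul_mk]; rfl, _root_.map_mul, toWord_mul,
      toWord_artinHom_mk_singleton]
    exact (artinImageHead_mk i L hL.tail).cons isReduced_toWord hL.head?_ne

theorem artinImageHead_toWord (i : ℕ) (f : FreeGroup ℕ) :
    ArtinImageHead i f.toWord.head? (artinHom i f).toWord := by
  simpa only [mk_toWord] using artinImageHead_mk i f.toWord isReduced_toWord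

def invSwapHom (i : ℕ) : FreeGroup ℕ →* FreeGroup ℕ :=
  lift fun j => (of (Equiv.swap i (i + 1) j))⁻¹

theorem artinInvHom_eq_comp (i : ℕ) :
    artinInvHom i = (invSwapHom i).comp ((artinHom i).comp (invSwapHom i)) := by
  ext j
  obtain rfl | hj := eq_or_ne j i
  · simp [artinInvHom, artinHom, invSwapHom]
  obtain rfl | hj' := eq_or_ne j (i + 1)
  · simp [artinInvHom, artinHom, invSwapHom, mul_assoc]
  · simp [artinInvHom, artinHom, invSwapHom, hj, hj', Equiv.swap_apply_of_ne_of_ne]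

theorem toWord_invSwapHom (i : ℕ) (f : FreeGroup ℕ) :
    (invSwapHom i f).toWord = f.toWord.map fun x => (Equiv.swap i (i + 1) x.1, !x.2) :=
  toWord_lift_inv_of (Equiv.injective _) f

theorem head?_toWord_artinHom_of_self {i : ℕ} {c : Bool} {f : FreeGroup ℕ}
    (hf : f.toWord.head? = some (i, c)) : (artinHom i f).toWord.head? = some (i, true) := by
  have h := artinImageHead_toWord i f
  rw [hf] at h
  generalize (artinHom i f).toWord = R at h
  cases h with
  | self => rfl
  | other _ _ _ hk => exact absurd rfl hk

theorem head?_toWord_artinHom_of_ne {i k : ℕ} {c : Bool} {f : FreeGroup ℕ}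
    (hf : f.toWord.head? = some (k, c)) (hk : k ≠ i) (hk' : k ≠ i + 1) :
    (artinHom i f).toWord.head? = some (k, c) := by
  have h := artinImageHead_toWord i f
  rw [hf] at h
  generalize (artinHom i f).toWord = R at h
  cases h <;> simp_all

theorem head?_toWord_artinInvHom_of_ne {i k : ℕ} {c : Bool} {f : FreeGroup ℕ}
    (hf : f.toWord.head? = some (k, c)) (hk : k ≠ i) (hk' : k ≠ i + 1) :
    (artinInvHom i f).toWord.head? = some (k, c) := by
  have hswap : Equiv.swap i (i + 1) k = k := Equiv.swap_apply_of_ne_of_ne hk hk'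
  have hθf : (invSwapHom i f).toWord.head? = some (k, !c) := by
    simp [toWord_invSwapHom, hf, hswap]
  rw [artinInvHom_eq_comp, MonoidHom.comp_apply, MonoidHom.comp_apply, toWord_invSwapHom,
    List.head?_map, head?_toWord_artinHom_of_ne hθf hk hk']
  simp [hswap]

/-- If the reduced word of `f` begins with the letter `g_1` (positively), and `σ` is
`φ_i` or `φ_i⁻¹` for some `i ≥ 1` but not `φ_1⁻¹`, then the reduced word of `σ(f)`
also begins with `g_1` (positively). -/
theorem artin_preserves_leading_g1
    (f : FreeGroup ℕ) (hf : f.toWord.head? = some (1, true))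
    (i : ℕ) (hi : 1 ≤ i) (σ : FreeGroup ℕ →* FreeGroup ℕ)
    (hσ : σ = artinHom i ∨ σ = artinInvHom i)
    (hσ1 : σ ≠ artinInvHom 1) :
    (σ f).toWord.head? = some (1, true) := by
  rcases hσ with rfl | rfl
  · obtain rfl | hi1 := eq_or_ne i 1
    · exact head?_toWord_artinHom_of_self hf
    · exact head?_toWord_artinHom_of_ne hf hi1.symm (by omega)
  · have hi1 : i ≠ 1 := by rintro rfl; exact hσ1 rfl
    exact head?_toWord_artinInvHom_of_ne hf hi1.symm (by omega)
end

section
/- Let f be an element of the free group F_X whose reduced word begins with the letter x_m^{-1} (negative sign), and let σ be τ_k or τ_k^{-1} for some k ≥ 1. Then the reduced word of σ(f) begins with x_m^{-1}, x_{m+1}^{-1}, or x_{m−1}^{-1}. -/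
/-- The automorphism `τ_i` (as an endomorphism of the free group `F_X` on
`x_0, x_1, …`, given by its values on the generators, for `i ≥ 1`):
`x_i ↦ x_{i+1} · x_i⁻¹ · x_{i-1}` and `x_j ↦ x_j` for `j ≠ i`. -/
def tauHom (i : ℕ) : FreeGroup ℕ →* FreeGroup ℕ :=
  FreeGroup.lift fun j =>
    if j = i then FreeGroup.of (i + 1) * (FreeGroup.of i)⁻¹ * FreeGroup.of (i - 1)
    else FreeGroup.of j

/-- The inverse automorphism `τ_i⁻¹`: `x_i ↦ x_{i-1} · x_i⁻¹ · x_{i+1}` and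
`x_j ↦ x_j` for `j ≠ i`. -/
def tauInvHom (i : ℕ) : FreeGroup ℕ →* FreeGroup ℕ :=
  FreeGroup.lift fun j =>
    if j = i then FreeGroup.of (i - 1) * (FreeGroup.of i)⁻¹ * FreeGroup.of (i + 1)
    else FreeGroup.of j

/-! Write `σ` for the endomorphism `x_k ↦ x_p x_k⁻¹ x_q` (with `p, q ≠ k`); `τ_k` and `τ_k⁻¹` are
the cases `(p, q) = (k + 1, k - 1)` and `(k - 1, k + 1)`. When `σ` is applied letter by letter to a
reduced word, cancellation between adjacent blocks removes at most an outer letter `x_p^{±1}` or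
`x_q^{±1}` of a block `x_p x_k⁻¹ x_q` (or its inverse), never its middle letter. Hence the reduced
word of `σ(w)` begins with a prefix that only depends on the first two letters of `w`: for
`w = x_m⁻¹ ⋯` it begins with `x_q⁻¹` if `m = k`, with `x_k⁻¹` if `m = p` and the next letter is
`x_k`, and with `x_m⁻¹` otherwise. -/

namespace FreeGroup

variable {α : Type*}

theorem mk_singleton_true (x : α) : mk [(x, true)] = of x := rfl

theorem mk_singleton_false (x : α) : mk [(x, false)] = (of x)⁻¹ := by
  rw [← mk_singleton_true, inv_mk]
  rfl

theorem isReduced_cons_iff {a : α × Bool} {t : List (α × Bool)} :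
    IsReduced (a :: t) ↔ IsReduced t ∧ t.head? ≠ some (a.1, !a.2) := by
  rcases t with _ | ⟨⟨j, c⟩, t⟩
  · simp [IsReduced.singleton, IsReduced.nil]
  · obtain ⟨i, b⟩ := a
    rw [isReduced_cons_cons]
    cases b <;> cases c <;> simp [and_comm, eq_comm]

theorem IsReduced.head?_ne_inv {a : α × Bool} {t : List (α × Bool)} (h : IsReduced (a :: t)) :
    t.head? ≠ some (a.1, !a.2) :=
  (isReduced_cons_iff.mp h).2

variable [DecidableEq α]

theorem toWord_mk_singleton_mul {a : α × Bool} {g : FreeGroup α}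
    (h : g.toWord.head? ≠ some (a.1, !a.2)) : (mk [a] * g).toWord = a :: g.toWord := by
  rw [toWord_mul, toWord_mk, reduce_singleton, List.singleton_append,
    (isReduced_cons_iff.mpr ⟨isReduced_toWord, h⟩).reduce_eq]

theorem toWord_mk_singleton_mul_of_eq_cons {a : α × Bool} {g : FreeGroup α} {t : List (α × Bool)}
    (h : g.toWord = (a.1, !a.2) :: t) : (mk [a] * g).toWord = t := by
  have ht : IsReduced t := (isReduced_cons_iff.mp (h ▸ isReduced_toWord)).1
  rw [toWord_mul, toWord_mk, reduce_singleton, h, List.singleton_append,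
    reduce.Step.eq Red.Step.cons_not, ht.reduce_eq]

theorem toWord_mk_pair_mul {a b : α × Bool} {g : FreeGroup α} (hab : a.1 ≠ b.1)
    (hb : g.toWord.head? ≠ some (b.1, !b.2)) :
    (mk [a] * (mk [b] * g)).toWord = a :: b :: g.toWord := by
  have hbg := toWord_mk_singleton_mul hb
  rw [toWord_mk_singleton_mul (by simpa [hbg, Prod.ext_iff] using fun h => absurd h.symm hab), hbg]

def twistHom (k p q : α) : FreeGroup α →* FreeGroup α :=
  lift fun j => if j = k then of p * (of k)⁻¹ * of q else of j

variable {k p q : α}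

theorem twistHom_mk_cons (a : α × Bool) (t : List (α × Bool)) :
    twistHom k p q (mk (a :: t)) = twistHom k p q (mk [a]) * twistHom k p q (mk t) := by
  rw [← _root_.map_mul, mul_mk, List.singleton_append]

theorem twistHom_mk_self_true :
    twistHom k p q (mk [(k, true)]) = mk [(p, true)] * (mk [(k, false)] * mk [(q, true)]) := by
  simp [twistHom, mul_assoc, mk_singleton_true, mk_singleton_false]

theorem twistHom_mk_self_false :
    twistHom k p q (mk [(k, false)]) = mk [(q, false)] * (mk [(k, true)] * mk [(p, false)]) := by
  simp [twistHom, mul_assoc, mk_singleton_true, mk_singleton_false]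

theorem twistHom_mk_of_ne {j : α} (hj : j ≠ k) (b : Bool) :
    twistHom k p q (mk [(j, b)]) = mk [(j, b)] := by
  cases b <;> simp [twistHom, hj, mk_singleton_true, mk_singleton_false]

def twistPrefix (k p q : α) : List (α × Bool) → List (α × Bool)
  | [] => []
  | (j, b) :: t =>
    if j = k then (if b then [(p, true), (k, false)] else [(q, false), (k, true)])
    else if (j, b) = (p, false) ∧ t.head? = some (k, true) then [(k, false)]
    else if (j, b) = (q, true) ∧ t.head? = some (k, false) then [(k, true)]
    else [(j, b)]

theorem head?_twistPrefix_ne_self_true (hpk : p ≠ k) {w : List (α × Bool)}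
    (hw : w.head? ≠ some (q, true)) : (twistPrefix k p q w).head? ≠ some (k, true) := by
  rcases w with _ | ⟨⟨j, b⟩, t⟩
  · simp [twistPrefix]
  · simp only [twistPrefix]
    split_ifs <;> grind

theorem head?_twistPrefix_ne_self_false (hqk : q ≠ k) {w : List (α × Bool)}
    (hw : w.head? ≠ some (p, false)) : (twistPrefix k p q w).head? ≠ some (k, false) := by
  rcases w with _ | ⟨⟨j, b⟩, t⟩
  · simp [twistPrefix]
  · simp only [twistPrefix]
    split_ifs <;> grind

theorem head?_twistPrefix_ne_right (hqk : q ≠ k) {w : List (α × Bool)}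
    (hk : w.head? ≠ some (k, false)) (hq : w.head? ≠ some (q, false)) :
    (twistPrefix k p q w).head? ≠ some (q, false) := by
  rcases w with _ | ⟨⟨j, b⟩, t⟩
  · simp [twistPrefix]
  · simp only [twistPrefix]
    split_ifs <;> grind

theorem head?_twistPrefix_ne_left (hpk : p ≠ k) {w : List (α × Bool)}
    (hk : w.head? ≠ some (k, true)) (hp : w.head? ≠ some (p, true)) :
    (twistPrefix k p q w).head? ≠ some (p, true) := by
  rcases w with _ | ⟨⟨j, b⟩, t⟩
  · simp [twistPrefix]
  · simp only [twistPrefix]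
    split_ifs <;> grind

theorem head?_twistPrefix_ne_inv {j : α} {b : Bool} (hj : j ≠ k)
    {t : List (α × Bool)} (ht : IsReduced ((j, b) :: t))
    (hp : ¬((j, b) = (p, false) ∧ t.head? = some (k, true)))
    (hq : ¬((j, b) = (q, true) ∧ t.head? = some (k, false))) :
    (twistPrefix k p q t).head? ≠ some (j, !b) := by
  rcases t with _ | ⟨⟨j', b'⟩, t⟩
  · simp [twistPrefix]
  · simp only [twistPrefix]
    rw [isReduced_cons_cons] at ht
    split_ifs <;> cases b <;> cases b' <;> grind

theorem twistPrefix_cons_ne_nil (a : α × Bool) (t : List (α × Bool)) :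
    twistPrefix k p q (a :: t) ≠ [] := by
  simp only [twistPrefix]
  split_ifs <;> simp

theorem head?_toWord_twistHom_of_prefix {w : List (α × Bool)}
    (h : twistPrefix k p q w <+: (twistHom k p q (mk w)).toWord) :
    (twistHom k p q (mk w)).toWord.head? = (twistPrefix k p q w).head? := by
  rcases w with _ | ⟨a, t⟩
  · simp [twistPrefix, ← one_eq_mk]
  · obtain ⟨r, hr⟩ := h
    rw [← hr, List.head?_append,
      Option.or_of_isSome (List.isSome_head?.mpr (twistPrefix_cons_ne_nil a t))]

theorem head?_toWord_mk_mul_twistHom_ne_self_false (hpk : p ≠ k) (hqk : q ≠ k)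
    {t : List (α × Bool)} (hw : IsReduced ((k, false) :: t))
    (hg : (twistHom k p q (mk t)).toWord.head? = (twistPrefix k p q t).head?)
    (hg' : ∀ t', t = (p, true) :: t' →
      (twistHom k p q (mk t')).toWord.head? = (twistPrefix k p q t').head?) :
    (mk [(p, false)] * twistHom k p q (mk t)).toWord.head? ≠ some (k, false) := by
  by_cases hpt : t.head? = some (p, true)
  · obtain ⟨t', rfl⟩ := List.head?_eq_some_iff.mp hpt
    rw [twistHom_mk_cons, twistHom_mk_of_ne hpk, ← mul_assoc, mk_singleton_false,
      mk_singleton_true, inv_mul_cancel, one_mul, hg' t' rfl]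
    exact head?_twistPrefix_ne_self_false hqk (isReduced_cons_iff.mp hw).1.head?_ne_inv
  · rw [toWord_mk_singleton_mul (hg ▸ head?_twistPrefix_ne_left hpk hw.head?_ne_inv hpt)]
    simpa using hpk

theorem head?_toWord_mk_mul_twistHom_ne_self_true (hpk : p ≠ k) (hqk : q ≠ k)
    {t : List (α × Bool)} (hw : IsReduced ((k, true) :: t))
    (hg : (twistHom k p q (mk t)).toWord.head? = (twistPrefix k p q t).head?)
    (hg' : ∀ t', t = (q, false) :: t' →
      (twistHom k p q (mk t')).toWord.head? = (twistPrefix k p q t').head?) :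
    (mk [(q, true)] * twistHom k p q (mk t)).toWord.head? ≠ some (k, true) := by
  by_cases hqt : t.head? = some (q, false)
  · obtain ⟨t', rfl⟩ := List.head?_eq_some_iff.mp hqt
    rw [twistHom_mk_cons, twistHom_mk_of_ne hqk, ← mul_assoc, mk_singleton_false,
      mk_singleton_true, mul_inv_cancel, one_mul, hg' t' rfl]
    exact head?_twistPrefix_ne_self_true hpk (isReduced_cons_iff.mp hw).1.head?_ne_inv
  · rw [toWord_mk_singleton_mul (hg ▸ head?_twistPrefix_ne_right hqk hw.head?_ne_inv hqt)]
    simpa using hqk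

theorem twistPrefix_prefix_toWord_cons_of_ne {j : α} {b : Bool} (hj : j ≠ k)
    {t : List (α × Bool)} (hw : IsReduced ((j, b) :: t))
    (ih : twistPrefix k p q t <+: (twistHom k p q (mk t)).toWord) :
    twistPrefix k p q ((j, b) :: t) <+: (twistHom k p q (mk ((j, b) :: t))).toWord := by
  rw [twistHom_mk_cons, twistHom_mk_of_ne hj]
  by_cases hp : (j, b) = (p, false) ∧ t.head? = some (k, true)
  · obtain ⟨hjb, hkt⟩ := hp
    obtain ⟨t', rfl⟩ := List.head?_eq_some_iff.mp hkt
    obtain ⟨r, hr⟩ := ih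
    obtain ⟨rfl, rfl⟩ := Prod.mk.inj hjb
    simp only [twistPrefix, if_true, List.cons_append] at hr
    rw [toWord_mk_singleton_mul_of_eq_cons hr.symm]
    simp [twistPrefix, hj]
  by_cases hq : (j, b) = (q, true) ∧ t.head? = some (k, false)
  · obtain ⟨hjb, hkt⟩ := hq
    obtain ⟨t', rfl⟩ := List.head?_eq_some_iff.mp hkt
    obtain ⟨r, hr⟩ := ih
    obtain ⟨rfl, rfl⟩ := Prod.mk.inj hjb
    simp only [twistPrefix, Bool.false_eq_true, if_false] at hr
    rw [toWord_mk_singleton_mul_of_eq_cons hr.symm]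
    simp [twistPrefix, hj]
  rw [toWord_mk_singleton_mul (head?_toWord_twistHom_of_prefix ih ▸
    head?_twistPrefix_ne_inv hj hw hp hq), twistPrefix, if_neg hj, if_neg hp, if_neg hq]
  exact List.prefix_cons_inj _ |>.mpr List.nil_prefix

theorem twistPrefix_prefix_toWord (hpk : p ≠ k) (hqk : q ≠ k) :
    ∀ w : List (α × Bool), IsReduced w → twistPrefix k p q w <+: (twistHom k p q (mk w)).toWord
  | [], _ => by simp [twistPrefix]
  | (j, b) :: t, hw => by
    have ht : IsReduced t := (isReduced_cons_iff.mp hw).1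
    have ih := twistPrefix_prefix_toWord hpk hqk t ht
    have hg := head?_toWord_twistHom_of_prefix ih
    have hg' (a : α × Bool) (t' : List (α × Bool)) (h : t = a :: t') :=
      head?_toWord_twistHom_of_prefix
        (twistPrefix_prefix_toWord hpk hqk t' (isReduced_cons_iff.mp (h ▸ ht)).1)
    by_cases hj : j = k
    · subst j
      rw [twistHom_mk_cons]
      cases b
      · rw [twistHom_mk_self_false, mul_assoc, mul_assoc, toWord_mk_pair_mul hqk
          (head?_toWord_mk_mul_twistHom_ne_self_false hpk hqk hw hg (hg' _))]
        simp [twistPrefix]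
      · rw [twistHom_mk_self_true, mul_assoc, mul_assoc, toWord_mk_pair_mul hpk
          (head?_toWord_mk_mul_twistHom_ne_self_true hpk hqk hw hg (hg' _))]
        simp [twistPrefix]
    · exact twistPrefix_prefix_toWord_cons_of_ne hj hw ih
termination_by w => w.length

theorem head?_toWord_twistHom (hpk : p ≠ k) (hqk : q ≠ k) (f : FreeGroup α) :
    (twistHom k p q f).toWord.head? = (twistPrefix k p q f.toWord).head? := by
  conv_lhs => rw [← mk_toWord (x := f)]
  exact head?_toWord_twistHom_of_prefix (twistPrefix_prefix_toWord hpk hqk _ isReduced_toWord)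

theorem head?_toWord_twistHom_of_head?_eq_inv (hpk : p ≠ k) (hqk : q ≠ k) {f : FreeGroup α}
    {m : α} (hf : f.toWord.head? = some (m, false)) :
    (twistHom k p q f).toWord.head? = some (m, false) ∨
    (m = k ∧ (twistHom k p q f).toWord.head? = some (q, false)) ∨
    (m = p ∧ (twistHom k p q f).toWord.head? = some (k, false)) := by
  obtain ⟨t, ht⟩ := List.head?_eq_some_iff.mp hf
  rw [head?_toWord_twistHom hpk hqk, ht, twistPrefix]
  split_ifs <;> simp_all

end FreeGroup

/-- If the reduced word of `f` begins with `x_m⁻¹` and `σ` is `τ_k` or `τ_k⁻¹` for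
some `k ≥ 1`, then the reduced word of `σ(f)` begins with `x_m⁻¹`, `x_{m+1}⁻¹`, or
`x_{m-1}⁻¹`. -/
theorem tau_leading_inverse_letter
    (f : FreeGroup ℕ) (m : ℕ) (hf : f.toWord.head? = some (m, false))
    (k : ℕ) (hk : 1 ≤ k) (σ : FreeGroup ℕ →* FreeGroup ℕ)
    (hσ : σ = tauHom k ∨ σ = tauInvHom k) :
    (σ f).toWord.head? = some (m, false) ∨
    (σ f).toWord.head? = some (m + 1, false) ∨
    (1 ≤ m ∧ (σ f).toWord.head? = some (m - 1, false)) := by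
  rcases hσ with rfl | rfl
  · obtain h | ⟨rfl, h⟩ | ⟨rfl, h⟩ := FreeGroup.head?_toWord_twistHom_of_head?_eq_inv
      (k := k) (p := k + 1) (q := k - 1) (by omega) (by omega) hf
    · exact Or.inl h
    · exact Or.inr (Or.inr ⟨hk, h⟩)
    · exact Or.inr (Or.inr ⟨by omega, h⟩)
  · obtain h | ⟨rfl, h⟩ | ⟨rfl, h⟩ := FreeGroup.head?_toWord_twistHom_of_head?_eq_inv
      (k := k) (p := k - 1) (q := k + 1) (by omega) (by omega) hf
    · exact Or.inl h
    · exact Or.inr (Or.inl h)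
    · exact Or.inr (Or.inl (by rwa [Nat.sub_add_cancel hk]))
end
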